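/- arXiv:2604.17907 — 2 statements merged into one kernel-verified Lean document; each statement's English description precedes it below -/
import Mathlib

section
/- Let d ≥ 2 and k ≥ 1 be integers, and let G be an n-vertex d-regular graph containing two edges at distance at least 2k + 2 from each other. Then λ₂(G)/λ_n(G) < (d − 2√(d−1))/(d + 2√(d−1)) + 4/((k+1)√(d−1)). -/
/-!
Fix an edge `e`, put `s = √(d - 1)` and let `x_e(v) = s ^ (-dist(v, e))` on the ball of radius `k`
around `e` (and `0` outside). Edge by edge, `(x_e a - x_e b)²` is at most `A` times the same
quantity for the alternating vector `y_e(v) = (-1) ^ dist(v, e) x_e(v)`, where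
`A = ((s - 1) / (s + 1))² = (d - 2s) / (d + 2s)`, plus a boundary term for the edges leaving the
ball. Since `y_e` has Rayleigh quotient at most `λₙ`, and since every level around `e` has at
most `d - 1` times as many vertices as the previous one (so the level masses of `x_e²` are
non-increasing and the outermost one is at most `‖x_e‖² / (k + 1)`), the Rayleigh quotient of
`x_e` is at most `A λₙ + (1 - A) (d - 1) / (k + 1)`. The test vectors of two edges at distance
at least `2k + 2` have disjoint supports with no edge between them, so a combination of them
orthogonal to the bottom eigenvector bounds `λ₂` by the same quantity; finally `λₙ ≥ d`.
-/

open Matrix SimpleGraph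

attribute [local instance] Classical.propDecidable

/-- Eigenvalues of a real square matrix, sorted in non-decreasing order
(junk value `0` if the matrix is not Hermitian). -/
noncomputable def sortedEigs {n : ℕ} (A : Matrix (Fin n) (Fin n) ℝ) : Fin n → ℝ :=
  if h : A.IsHermitian then h.eigenvalues ∘ Tuple.sort h.eigenvalues else 0

/-- `lapEig G i` is the `i`-th smallest Laplacian eigenvalue of `G` (1-based indexing),
so `lapEig G 2 = λ₂(G)` and `lapEig G n = λₙ(G)`; junk value `0` if `i` is out of range. -/
noncomputable def lapEig {n : ℕ} (G : SimpleGraph (Fin n)) (i : ℕ) : ℝ :=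
  if h : i - 1 < n then sortedEigs (G.lapMatrix ℝ) ⟨i - 1, h⟩ else 0

/-- `adjEig G i` is the `i`-th largest adjacency eigenvalue of `G` (1-based indexing),
so `adjEig G 1 = μ₁(G)` and `adjEig G n = μₙ(G)`; junk value `0` if `i` is out of range. -/
noncomputable def adjEig {n : ℕ} (G : SimpleGraph (Fin n)) (i : ℕ) : ℝ :=
  if h : n - i < n then sortedEigs (G.adjMatrix ℝ) ⟨n - i, h⟩ else 0

open Finset

namespace Matrix.IsHermitian

variable {n : ℕ} {A : Matrix (Fin n) (Fin n) ℝ} (hA : A.IsHermitian)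

noncomputable def eigenCoeffs (z : Fin n → ℝ) : Fin n → ℝ :=
  star (hA.eigenvectorUnitary : Matrix (Fin n) (Fin n) ℝ) *ᵥ z

lemma eigenCoeffs_add_smul (α β : ℝ) (x y : Fin n → ℝ) :
    hA.eigenCoeffs (α • x + β • y) = α • hA.eigenCoeffs x + β • hA.eigenCoeffs y := by
  simp only [eigenCoeffs, mulVec_add, mulVec_smul]

lemma dotProduct_mulVec_eq_sum_eigenCoeffs (z : Fin n → ℝ) :
    z ⬝ᵥ (A *ᵥ z) = ∑ i, hA.eigenvalues i * hA.eigenCoeffs z i ^ 2 := by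
  set U : Matrix (Fin n) (Fin n) ℝ := (hA.eigenvectorUnitary : Matrix (Fin n) (Fin n) ℝ)
  have hU : star U = Uᵀ := by ext; simp [star_apply]
  have hA' : A = U * diagonal (RCLike.ofReal ∘ hA.eigenvalues) * star U := hA.spectral_theorem
  conv_lhs => rw [hA']
  rw [← mulVec_mulVec, ← mulVec_mulVec, dotProduct_mulVec, ← mulVec_transpose, ← hU]
  simp [eigenCoeffs, U, dotProduct, mulVec_diagonal, sq, mul_left_comm]

lemma dotProduct_self_eq_sum_eigenCoeffs (z : Fin n → ℝ) :
    z ⬝ᵥ z = ∑ i, hA.eigenCoeffs z i ^ 2 := by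
  set U : Matrix (Fin n) (Fin n) ℝ := (hA.eigenvectorUnitary : Matrix (Fin n) (Fin n) ℝ)
  have hU : star U = Uᵀ := by ext; simp [star_apply]
  have hUU : U * star U = 1 := mem_unitaryGroup_iff.mp hA.eigenvectorUnitary.2
  conv_lhs => rw [← one_mulVec z, ← hUU]
  rw [← mulVec_mulVec, dotProduct_mulVec, ← mulVec_transpose, ← hU]
  simp [eigenCoeffs, U, dotProduct, sq]

include hA in
lemma sortedEigs_eq : sortedEigs A = hA.eigenvalues ∘ Tuple.sort hA.eigenvalues :=
  dif_pos hA

include hA in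
lemma dotProduct_mulVec_le_sortedEigs_last (hn : n - 1 < n) (z : Fin n → ℝ) :
    z ⬝ᵥ (A *ᵥ z) ≤ sortedEigs A ⟨n - 1, hn⟩ * (z ⬝ᵥ z) := by
  rw [hA.dotProduct_mulVec_eq_sum_eigenCoeffs, hA.dotProduct_self_eq_sum_eigenCoeffs, mul_sum]
  refine sum_le_sum fun i _ => mul_le_mul_of_nonneg_right ?_ (sq_nonneg _)
  set σ := Tuple.sort hA.eigenvalues
  rw [hA.sortedEigs_eq, ← σ.apply_symm_apply i]
  exact Tuple.monotone_sort hA.eigenvalues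
    (show σ.symm i ≤ ⟨n - 1, hn⟩ from Fin.le_def.mpr (Nat.le_sub_one_of_lt (σ.symm i).isLt))

lemma sortedEigs_one_mul_le (hn : 1 < n) (z : Fin n → ℝ)
    (hz : hA.eigenCoeffs z (Tuple.sort hA.eigenvalues ⟨0, by omega⟩) = 0) :
    sortedEigs A ⟨1, hn⟩ * (z ⬝ᵥ z) ≤ z ⬝ᵥ (A *ᵥ z) := by
  rw [hA.dotProduct_mulVec_eq_sum_eigenCoeffs, hA.dotProduct_self_eq_sum_eigenCoeffs, mul_sum]
  set σ := Tuple.sort hA.eigenvalues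
  rw [← Equiv.sum_comp σ (fun i => hA.eigenvalues i * hA.eigenCoeffs z i ^ 2),
    ← Equiv.sum_comp σ (fun i => sortedEigs A ⟨1, hn⟩ * hA.eigenCoeffs z i ^ 2)]
  refine sum_le_sum fun j _ => ?_
  by_cases hj : j = ⟨0, by omega⟩
  · simp [hj, hz]
  · refine mul_le_mul_of_nonneg_right ?_ (sq_nonneg _)
    rw [hA.sortedEigs_eq]
    exact Tuple.monotone_sort _
      (Fin.le_def.mpr (Nat.one_le_iff_ne_zero.mpr fun h => hj (Fin.ext h)))

include hA in
lemma dotProduct_mulVec_comm (x y : Fin n → ℝ) : y ⬝ᵥ (A *ᵥ x) = x ⬝ᵥ (A *ᵥ y) := by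
  have hAt : Aᵀ = A := by simpa [conjTranspose_eq_transpose_of_trivial] using hA.eq
  rw [dotProduct_mulVec, ← mulVec_transpose, hAt, dotProduct_comm]

include hA in
/-- Courant–Fischer for the second eigenvalue: some nonzero combination of `x` and `y` is
orthogonal to the bottom eigenvector. -/
lemma sortedEigs_one_le_of_orthogonal (hn : 1 < n) {x y : Fin n → ℝ} {ρ : ℝ}
    (hx : 0 < x ⬝ᵥ x) (hy : 0 < y ⬝ᵥ y) (hxy : x ⬝ᵥ y = 0) (hAxy : x ⬝ᵥ (A *ᵥ y) = 0)
    (hxρ : x ⬝ᵥ (A *ᵥ x) ≤ ρ * (x ⬝ᵥ x)) (hyρ : y ⬝ᵥ (A *ᵥ y) ≤ ρ * (y ⬝ᵥ y)) :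
    sortedEigs A ⟨1, hn⟩ ≤ ρ := by
  set i₀ := Tuple.sort hA.eigenvalues ⟨0, by omega⟩
  obtain ⟨α, β, hαβ, hcoef⟩ : ∃ α β : ℝ, (α ≠ 0 ∨ β ≠ 0) ∧
      α * hA.eigenCoeffs x i₀ + β * hA.eigenCoeffs y i₀ = 0 := by
    by_cases hc : hA.eigenCoeffs x i₀ = 0
    · exact ⟨1, 0, by simp, by simp [hc]⟩
    · exact ⟨hA.eigenCoeffs y i₀, -hA.eigenCoeffs x i₀, .inr (neg_ne_zero.mpr hc), by ring⟩
  set z := α • x + β • y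
  have hz : hA.eigenCoeffs z i₀ = 0 := by simpa [z, eigenCoeffs_add_smul] using hcoef
  have hzz : z ⬝ᵥ z = α ^ 2 * (x ⬝ᵥ x) + β ^ 2 * (y ⬝ᵥ y) := by
    simp only [z, dotProduct_add, add_dotProduct, dotProduct_smul, smul_dotProduct, smul_eq_mul,
      dotProduct_comm y x, hxy]
    ring
  have hzAz : z ⬝ᵥ (A *ᵥ z) = α ^ 2 * (x ⬝ᵥ (A *ᵥ x)) + β ^ 2 * (y ⬝ᵥ (A *ᵥ y)) := by
    simp only [z, mulVec_add, mulVec_smul, dotProduct_add, add_dotProduct, dotProduct_smul,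
      smul_dotProduct, smul_eq_mul, hA.dotProduct_mulVec_comm x y, hAxy]
    ring
  have hz_pos : 0 < z ⬝ᵥ z := by
    rw [hzz]
    rcases hαβ with h | h
    · exact add_pos_of_pos_of_nonneg (mul_pos (sq_pos_of_ne_zero h) hx) (by positivity)
    · exact add_pos_of_nonneg_of_pos (by positivity) (mul_pos (sq_pos_of_ne_zero h) hy)
  refine le_of_mul_le_mul_right ((hA.sortedEigs_one_mul_le hn z hz).trans ?_) hz_pos
  rw [hzAz, hzz]
  linarith [mul_le_mul_of_nonneg_left hxρ (sq_nonneg α),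
    mul_le_mul_of_nonneg_left hyρ (sq_nonneg β)]

end Matrix.IsHermitian

noncomputable def decayProfile (s : ℝ) (k : ℕ) (t : ℕ∞) : ℝ :=
  if t ≤ k then (s ^ t.toNat)⁻¹ else 0

noncomputable def altDecayProfile (s : ℝ) (k : ℕ) (t : ℕ∞) : ℝ :=
  (-1) ^ t.toNat * decayProfile s k t

section DecayProfile

variable {s : ℝ} {k : ℕ} {t : ℕ∞}

lemma decayProfile_natCast {ℓ : ℕ} (h : ℓ ≤ k) : decayProfile s k ℓ = (s ^ ℓ)⁻¹ := by
  simp [decayProfile, h]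

lemma decayProfile_of_lt (h : (k : ℕ∞) < t) : decayProfile s k t = 0 := by
  simp [decayProfile, h.not_ge]

lemma le_of_decayProfile_ne_zero (h : decayProfile s k t ≠ 0) : t ≤ k :=
  not_lt.mp fun h' => h (decayProfile_of_lt h')

lemma altDecayProfile_sq : altDecayProfile s k t ^ 2 = decayProfile s k t ^ 2 := by
  rw [altDecayProfile, mul_pow, ← pow_mul, pow_mul', neg_one_sq, one_pow, one_mul]

lemma inv_pow_sub_inv_pow_succ_sq (hs : 0 < s) (p : ℕ) :
    ((s ^ p)⁻¹ - (s ^ (p + 1))⁻¹) ^ 2 =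
      ((s - 1) / (s + 1)) ^ 2 * ((-1) ^ p * (s ^ p)⁻¹ - (-1) ^ (p + 1) * (s ^ (p + 1))⁻¹) ^ 2 := by
  have hsign : ((-1 : ℝ) ^ p) ^ 2 = 1 := by rw [← pow_mul, pow_mul', neg_one_sq, one_pow]
  rw [pow_succ (-1 : ℝ), show ∀ a b c : ℝ, a * b - a * -1 * c = a * (b + c) by intros; ring,
    mul_pow, hsign, one_mul]
  field_simp
  ring

lemma sq_decayProfile_sub_le (hs : 0 < s) {t₁ t₂ : ℕ∞} (h₁₂ : t₂ ≤ t₁ + 1) (h₂₁ : t₁ ≤ t₂ + 1) :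
    (decayProfile s k t₁ - decayProfile s k t₂) ^ 2 ≤
      ((s - 1) / (s + 1)) ^ 2 * (altDecayProfile s k t₁ - altDecayProfile s k t₂) ^ 2 +
        (1 - ((s - 1) / (s + 1)) ^ 2) *
          ((if (k : ℕ∞) < t₂ then decayProfile s k t₁ ^ 2 else 0) +
            (if (k : ℕ∞) < t₁ then decayProfile s k t₂ ^ 2 else 0)) := by
  wlog h : t₁ ≤ t₂ generalizing t₁ t₂
  · have := this h₂₁ h₁₂ (le_of_not_ge h)
    linarith
  rcases le_or_gt t₂ k with h₂ | h₂
  · obtain ⟨q, rfl, hq⟩ := ENat.le_natCast_iff.mp h₂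
    obtain ⟨p, rfl, hpq⟩ := ENat.le_natCast_iff.mp h
    rw [if_neg h₂.not_gt, if_neg (h.trans h₂).not_gt, add_zero, mul_zero, add_zero]
    have hq' : q ≤ p + 1 := by exact_mod_cast h₁₂
    obtain rfl | rfl : q = p ∨ q = p + 1 := by omega
    · rw [sub_self, zero_pow two_ne_zero]; positivity
    · simp only [altDecayProfile, ENat.toNat_natCast, decayProfile_natCast hq,
        decayProfile_natCast (hpq.trans hq)]
      exact (inv_pow_sub_inv_pow_succ_sq hs p).le
  · have hy₂ : altDecayProfile s k t₂ = 0 := by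
      rw [altDecayProfile, decayProfile_of_lt h₂, mul_zero]
    rw [decayProfile_of_lt h₂, hy₂, if_pos h₂, sub_zero, sub_zero, altDecayProfile_sq]
    rcases le_or_gt t₁ k with h₁ | h₁
    · rw [if_neg h₁.not_gt, add_zero]
      linarith
    · simp [decayProfile_of_lt h₁]

end DecayProfile

namespace SimpleGraph

section EdgeEdist

variable {V : Type*} (G : SimpleGraph V)

noncomputable def edgeEdist (u₀ u₁ v : V) : ℕ∞ := G.edist u₀ v ⊓ G.edist u₁ v

variable {G} {u₀ u₁ v₀ v₁ a b : V}

@[simp] lemma edgeEdist_left : G.edgeEdist u₀ u₁ u₀ = 0 := by simp [edgeEdist]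

@[simp] lemma edgeEdist_right : G.edgeEdist u₀ u₁ u₁ = 0 := by simp [edgeEdist]

lemma edgeEdist_le_add_edist (u₀ u₁ a b : V) :
    G.edgeEdist u₀ u₁ b ≤ G.edgeEdist u₀ u₁ a + G.edist a b := by
  rw [edgeEdist, edgeEdist, ← min_add_add_right]
  exact min_le_min G.edist_triangle G.edist_triangle

lemma edgeEdist_le_add_one_of_adj (h : G.Adj a b) :
    G.edgeEdist u₀ u₁ b ≤ G.edgeEdist u₀ u₁ a + 1 :=
  (edgeEdist_le_add_edist u₀ u₁ a b).trans_eq (by rw [edist_eq_one_iff_adj.mpr h])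

lemma edgeEdist_min_le (u₀ u₁ v₀ v₁ a b : V) :
    G.edgeEdist u₀ u₁ v₀ ⊓ G.edgeEdist u₀ u₁ v₁ ≤
      G.edgeEdist u₀ u₁ a + G.edist a b + G.edgeEdist v₀ v₁ b := by
  have key : ∀ v, G.edgeEdist u₀ u₁ v ≤ G.edgeEdist u₀ u₁ a + G.edist a b + G.edist v b :=
    fun v => (edgeEdist_le_add_edist u₀ u₁ b v).trans <| by
      rw [edist_comm (u := b)]; gcongr; exact edgeEdist_le_add_edist u₀ u₁ a b
  change _ ≤ _ + (G.edist v₀ b ⊓ G.edist v₁ b)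
  rw [← min_add_add_left]
  exact le_min ((min_le_left _ _).trans (key v₀)) ((min_le_right _ _).trans (key v₁))

lemma exists_adj_edist_le_of_edist_eq_succ {u : V} {m : ℕ} (h : G.edist u a = (m + 1 : ℕ)) :
    ∃ b, G.Adj a b ∧ G.edist u b ≤ m := by
  obtain ⟨p, hp⟩ := exists_walk_of_edist_eq_coe h
  have hnil : ¬ p.reverse.Nil := by simp [← Walk.length_eq_zero_iff, hp]
  refine ⟨_, p.reverse.adj_snd hnil, ?_⟩
  have hlen := p.reverse.length_tail_add_one hnil
  rw [Walk.length_reverse, hp] at hlen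
  rw [edist_comm]
  exact (edist_le p.reverse.tail).trans (by exact_mod_cast (by omega : p.reverse.tail.length ≤ m))

lemma exists_adj_edgeEdist_eq {m : ℕ} (h : G.edgeEdist u₀ u₁ a = (m + 1 : ℕ)) :
    ∃ b, G.Adj a b ∧ G.edgeEdist u₀ u₁ b = m := by
  obtain ⟨b, hab, hb⟩ : ∃ b, G.Adj a b ∧ G.edgeEdist u₀ u₁ b ≤ m := by
    rcases min_choice (G.edist u₀ a) (G.edist u₁ a) with h' | h' <;> rw [edgeEdist, h'] at h
    · obtain ⟨b, hab, hb⟩ := exists_adj_edist_le_of_edist_eq_succ h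
      exact ⟨b, hab, (min_le_left _ _).trans hb⟩
    · obtain ⟨b, hab, hb⟩ := exists_adj_edist_le_of_edist_eq_succ h
      exact ⟨b, hab, (min_le_right _ _).trans hb⟩
  refine ⟨b, hab, le_antisymm hb ?_⟩
  have := edgeEdist_le_add_one_of_adj (u₀ := u₀) (u₁ := u₁) hab.symm
  rw [h, Nat.cast_succ] at this
  exact (ENat.add_le_add_iff_right ENat.one_ne_top).mp this

lemma exists_adj_edgeEdist_le (he : G.Adj u₀ u₁) {ℓ : ℕ} (ha : G.edgeEdist u₀ u₁ a = ℓ) :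
    ∃ b, G.Adj a b ∧ G.edgeEdist u₀ u₁ b ≤ ℓ := by
  cases ℓ with
  | zero =>
    rcases min_choice (G.edist u₀ a) (G.edist u₁ a) with h | h <;>
      rw [edgeEdist, h, Nat.cast_zero, edist_eq_zero_iff] at ha <;> subst ha
    · exact ⟨u₁, he, by simp⟩
    · exact ⟨u₀, he.symm, by simp⟩
  | succ m =>
    obtain ⟨b, hab, hb⟩ := exists_adj_edgeEdist_eq ha
    exact ⟨b, hab, hb.trans_le (by exact_mod_cast m.le_succ)⟩

variable [Fintype V] [DecidableRel G.Adj] {d : ℕ}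

lemma card_filter_neighborFinset_lt_edgeEdist_le (he : G.Adj u₀ u₁) (hdeg : G.degree a ≤ d)
    {ℓ : ℕ} (ha : G.edgeEdist u₀ u₁ a = ℓ) :
    #{b ∈ G.neighborFinset a | (ℓ : ℕ∞) < G.edgeEdist u₀ u₁ b} ≤ d - 1 := by
  obtain ⟨b, hab, hb⟩ := exists_adj_edgeEdist_le he ha
  have : #{b ∈ G.neighborFinset a | (ℓ : ℕ∞) < G.edgeEdist u₀ u₁ b} < G.degree a :=
    card_lt_card (filter_ssubset.mpr ⟨b, (G.mem_neighborFinset a b).mpr hab, hb.not_gt⟩)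
  omega

lemma card_edgeEdist_eq_succ_le (he : G.Adj u₀ u₁) (hdeg : ∀ v, G.degree v ≤ d) (ℓ : ℕ) :
    #{v | G.edgeEdist u₀ u₁ v = (ℓ + 1 : ℕ)} ≤ (d - 1) * #{v | G.edgeEdist u₀ u₁ v = ℓ} := by
  rw [mul_comm, ← mul_one #{v | G.edgeEdist u₀ u₁ v = (ℓ + 1 : ℕ)}]
  refine card_mul_le_card_mul G.Adj (fun a ha => ?_) (fun b hb => ?_)
  · obtain ⟨b, hab, hb⟩ := exists_adj_edgeEdist_eq (mem_filter.mp ha).2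
    exact card_pos.mpr ⟨b, mem_filter.mpr ⟨mem_filter.mpr ⟨mem_univ _, hb⟩, hab⟩⟩
  · refine (card_le_card fun c hc => ?_).trans
      (card_filter_neighborFinset_lt_edgeEdist_le he (hdeg b) (mem_filter.mp hb).2)
    simp only [mem_bipartiteBelow, mem_filter, mem_univ, true_and, mem_neighborFinset] at hc ⊢
    exact ⟨hc.2.symm, by rw [hc.1]; exact_mod_cast ℓ.lt_succ_self⟩

end EdgeEdist

section Laplacian

variable {V : Type*} [Fintype V] [DecidableEq V] (G : SimpleGraph V) [DecidableRel G.Adj]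

lemma dotProduct_lapMatrix_mulVec (x : V → ℝ) :
    x ⬝ᵥ (G.lapMatrix ℝ *ᵥ x) = (∑ i, ∑ j, if G.Adj i j then (x i - x j) ^ 2 else 0) / 2 := by
  rw [← toLinearMap₂'_apply', lapMatrix_toLinearMap₂']

variable {G} in
lemma dotProduct_lapMatrix_mulVec_eq_zero {x y : V → ℝ}
    (hxy : ∀ i j, G.edist i j ≤ 1 → x i * y j = 0) : x ⬝ᵥ (G.lapMatrix ℝ *ᵥ y) = 0 := by
  refine sum_eq_zero fun i _ => ?_
  have hnbr : ∀ j ∈ G.neighborFinset i, x i * y j = 0 := fun j hj =>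
    hxy i j (edist_le_one_iff_adj_or_eq.mpr (.inl ((G.mem_neighborFinset i j).mp hj)))
  rw [lapMatrix_mulVec_apply, mul_sub, mul_sum, mul_left_comm, hxy i i (by simp), mul_zero,
    sum_eq_zero hnbr, sub_zero]

lemma dotProduct_lapMatrix_mulVec_single (v : V) :
    Pi.single v 1 ⬝ᵥ (G.lapMatrix ℝ *ᵥ Pi.single v 1) = G.degree v := by
  rw [single_dotProduct, one_mul, lapMatrix_mulVec_apply, Pi.single_eq_same, mul_one,
    sum_eq_zero fun u hu => Pi.single_eq_of_ne ((G.mem_neighborFinset v u).mp hu).ne' _, sub_zero]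

end Laplacian

section LapEig

variable {n : ℕ} (G : SimpleGraph (Fin n))

lemma dotProduct_lapMatrix_mulVec_le_lapEig_last (hn : 0 < n) (z : Fin n → ℝ) :
    z ⬝ᵥ (G.lapMatrix ℝ *ᵥ z) ≤ lapEig G n * (z ⬝ᵥ z) := by
  rw [lapEig, dif_pos (by omega)]
  exact (G.isHermitian_lapMatrix ℝ).dotProduct_mulVec_le_sortedEigs_last _ z

lemma degree_le_lapEig_last (v : Fin n) : (G.degree v : ℝ) ≤ lapEig G n := by
  simpa [← dotProduct_lapMatrix_mulVec_single] using
    G.dotProduct_lapMatrix_mulVec_le_lapEig_last v.pos (Pi.single v 1)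

variable {G} in
lemma lapEig_two_le_of_disjoint (hn : 1 < n) {x y : Fin n → ℝ} {ρ : ℝ}
    (hx : 0 < x ⬝ᵥ x) (hy : 0 < y ⬝ᵥ y) (hxy : ∀ i j, G.edist i j ≤ 1 → x i * y j = 0)
    (hxρ : x ⬝ᵥ (G.lapMatrix ℝ *ᵥ x) ≤ ρ * (x ⬝ᵥ x))
    (hyρ : y ⬝ᵥ (G.lapMatrix ℝ *ᵥ y) ≤ ρ * (y ⬝ᵥ y)) :
    lapEig G 2 ≤ ρ := by
  rw [lapEig, dif_pos (by omega)]
  exact (G.isHermitian_lapMatrix ℝ).sortedEigs_one_le_of_orthogonal hn hx hy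
    (sum_eq_zero fun i _ => hxy i i (by simp)) (dotProduct_lapMatrix_mulVec_eq_zero hxy) hxρ hyρ

end LapEig

section EdgeTestVec

variable {V : Type*} (G : SimpleGraph V)

noncomputable def edgeTestVec (u₀ u₁ : V) (s : ℝ) (k : ℕ) (v : V) : ℝ :=
  decayProfile s k (G.edgeEdist u₀ u₁ v)

noncomputable def altEdgeTestVec (u₀ u₁ : V) (s : ℝ) (k : ℕ) (v : V) : ℝ :=
  altDecayProfile s k (G.edgeEdist u₀ u₁ v)

variable {G} {u₀ u₁ v₀ v₁ a b : V} {s : ℝ} {k d : ℕ}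

lemma edgeTestVec_mul_edgeTestVec_eq_zero
    (hfar : ((2 * k + 2 : ℕ) : ℕ∞) ≤ G.edgeEdist u₀ u₁ v₀ ⊓ G.edgeEdist u₀ u₁ v₁)
    (hab : G.edist a b ≤ 1) : G.edgeTestVec u₀ u₁ s k a * G.edgeTestVec v₀ v₁ s k b = 0 := by
  by_contra h
  obtain ⟨ha, hb⟩ := mul_ne_zero_iff.mp h
  have := hfar.trans <| (edgeEdist_min_le u₀ u₁ v₀ v₁ a b).trans <|
    add_le_add (add_le_add (le_of_decayProfile_ne_zero ha) hab) (le_of_decayProfile_ne_zero hb)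
  norm_cast at this
  omega

variable [Fintype V]

lemma one_le_dotProduct_self_edgeTestVec :
    1 ≤ G.edgeTestVec u₀ u₁ s k ⬝ᵥ G.edgeTestVec u₀ u₁ s k := by
  have hx : G.edgeTestVec u₀ u₁ s k u₀ = 1 := by
    simp [edgeTestVec, decayProfile]
  calc (1 : ℝ) = G.edgeTestVec u₀ u₁ s k u₀ * G.edgeTestVec u₀ u₁ s k u₀ := by rw [hx, one_mul]
    _ ≤ _ := single_le_sum (f := fun v => G.edgeTestVec u₀ u₁ s k v * G.edgeTestVec u₀ u₁ s k v)
      (fun v _ => mul_self_nonneg _) (mem_univ u₀)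

lemma sum_level_sq_edgeTestVec {ℓ : ℕ} (hℓ : ℓ ≤ k) :
    ∑ a with G.edgeEdist u₀ u₁ a = ℓ, G.edgeTestVec u₀ u₁ s k a ^ 2 =
      #{a | G.edgeEdist u₀ u₁ a = ℓ} * ((s ^ 2) ^ ℓ)⁻¹ := by
  rw [← nsmul_eq_mul, ← sum_const]
  refine sum_congr rfl fun a ha => ?_
  rw [edgeTestVec, (mem_filter.mp ha).2, decayProfile_natCast hℓ, inv_pow, ← pow_mul, pow_mul']

variable [DecidableRel G.Adj]

lemma sum_level_succ_sq_edgeTestVec_le (hs0 : 0 < s) (hs : s ^ 2 = d - 1) (he : G.Adj u₀ u₁)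
    (hdeg : ∀ v, G.degree v ≤ d) (ℓ : ℕ) :
    ∑ a with G.edgeEdist u₀ u₁ a = (ℓ + 1 : ℕ), G.edgeTestVec u₀ u₁ s k a ^ 2 ≤
      ∑ a with G.edgeEdist u₀ u₁ a = ℓ, G.edgeTestVec u₀ u₁ s k a ^ 2 := by
  rcases le_or_gt (ℓ + 1) k with hℓ | hℓ
  · rw [sum_level_sq_edgeTestVec hℓ, sum_level_sq_edgeTestVec (by omega), pow_succ, mul_inv]
    have hcount : (#{a | G.edgeEdist u₀ u₁ a = (ℓ + 1 : ℕ)} : ℝ) ≤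
        s ^ 2 * #{a | G.edgeEdist u₀ u₁ a = ℓ} := by
      have hd : 1 ≤ d := (G.degree_pos_iff_exists_adj u₀).mpr ⟨u₁, he⟩ |>.trans_le (hdeg u₀)
      rw [hs, ← Nat.cast_pred hd]
      exact_mod_cast card_edgeEdist_eq_succ_le he hdeg ℓ
    calc _ ≤ s ^ 2 * #{a | G.edgeEdist u₀ u₁ a = ℓ} * (((s ^ 2) ^ ℓ)⁻¹ * (s ^ 2)⁻¹) := by
          gcongr
      _ = _ := by field_simp
  · refine (sum_eq_zero fun a ha => ?_).trans_le (sum_nonneg fun a _ => sq_nonneg _)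
    rw [edgeTestVec, (mem_filter.mp ha).2, decayProfile_of_lt (by exact_mod_cast hℓ),
      zero_pow two_ne_zero]

lemma succ_mul_sum_level_sq_edgeTestVec_le (hs0 : 0 < s) (hs : s ^ 2 = d - 1)
    (he : G.Adj u₀ u₁) (hdeg : ∀ v, G.degree v ≤ d) :
    (k + 1) * ∑ a with G.edgeEdist u₀ u₁ a = k, G.edgeTestVec u₀ u₁ s k a ^ 2 ≤
      G.edgeTestVec u₀ u₁ s k ⬝ᵥ G.edgeTestVec u₀ u₁ s k := by
  set x := G.edgeTestVec u₀ u₁ s k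
  set m : ℕ → ℝ := fun ℓ => ∑ a with G.edgeEdist u₀ u₁ a = ℓ, x a ^ 2
  have hm : Antitone m :=
    antitone_nat_of_succ_le (sum_level_succ_sq_edgeTestVec_le hs0 hs he hdeg)
  calc (k + 1) * m k = ∑ _ℓ ∈ range (k + 1), m k := by simp
    _ ≤ ∑ ℓ ∈ range (k + 1), m ℓ := sum_le_sum fun ℓ hℓ => hm (Nat.le_of_lt_succ (mem_range.mp hℓ))
    _ = ∑ j ∈ (range (k + 1)).image (Nat.cast : ℕ → ℕ∞),
          ∑ a with G.edgeEdist u₀ u₁ a = j, x a ^ 2 :=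
        (sum_image (f := fun j => ∑ a with G.edgeEdist u₀ u₁ a = j, x a ^ 2)
          fun _ _ _ _ h => Nat.cast_injective h).symm
    _ = ∑ a with G.edgeEdist u₀ u₁ a ∈ (range (k + 1)).image (Nat.cast : ℕ → ℕ∞), x a ^ 2 :=
        sum_fiberwise_eq_sum_filter _ _ _ _
    _ ≤ ∑ a, x a ^ 2 := sum_le_sum_of_subset_of_nonneg (filter_subset _ _) fun _ _ _ => sq_nonneg _
    _ = x ⬝ᵥ x := by simp only [dotProduct, sq]

lemma sum_adj_sq_sub_edgeTestVec_le (hs : 0 < s) :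
    ∑ a, ∑ b, (if G.Adj a b then
        (G.edgeTestVec u₀ u₁ s k a - G.edgeTestVec u₀ u₁ s k b) ^ 2 else 0) ≤
      ((s - 1) / (s + 1)) ^ 2 * ∑ a, ∑ b, (if G.Adj a b then
        (G.altEdgeTestVec u₀ u₁ s k a - G.altEdgeTestVec u₀ u₁ s k b) ^ 2 else 0) +
      2 * (1 - ((s - 1) / (s + 1)) ^ 2) * ∑ a, ∑ b, (if G.Adj a b ∧ (k : ℕ∞) < G.edgeEdist u₀ u₁ b
        then G.edgeTestVec u₀ u₁ s k a ^ 2 else 0) := by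
  set A := ((s - 1) / (s + 1)) ^ 2
  set x := G.edgeTestVec u₀ u₁ s k
  set y := G.altEdgeTestVec u₀ u₁ s k
  set δ := G.edgeEdist u₀ u₁
  have hpt : ∀ a b, (if G.Adj a b then (x a - x b) ^ 2 else 0) ≤
      A * (if G.Adj a b then (y a - y b) ^ 2 else 0) +
        (1 - A) * ((if G.Adj a b ∧ (k : ℕ∞) < δ b then x a ^ 2 else 0) +
          (if G.Adj b a ∧ (k : ℕ∞) < δ a then x b ^ 2 else 0)) := by
    intro a b
    by_cases hab : G.Adj a b
    · simp only [hab, hab.symm, true_and, if_true]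
      exact sq_decayProfile_sub_le hs (edgeEdist_le_add_one_of_adj hab)
        (edgeEdist_le_add_one_of_adj hab.symm)
    · simp [hab, G.adj_comm b a]
  have hswap : ∑ a, ∑ b, (if G.Adj b a ∧ (k : ℕ∞) < δ a then x b ^ 2 else 0) =
      ∑ a, ∑ b, (if G.Adj a b ∧ (k : ℕ∞) < δ b then x a ^ 2 else 0) := sum_comm
  calc _ ≤ _ := sum_le_sum fun a _ => sum_le_sum fun b _ => hpt a b
    _ = _ := by
      simp only [mul_add, sum_add_distrib, ← mul_sum, hswap]
      ring

lemma sum_adj_boundary_le (he : G.Adj u₀ u₁) (hdeg : ∀ v, G.degree v ≤ d) :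
    ∑ a, ∑ b,
        (if G.Adj a b ∧ (k : ℕ∞) < G.edgeEdist u₀ u₁ b then G.edgeTestVec u₀ u₁ s k a ^ 2 else 0) ≤
      (d - 1) * ∑ a with G.edgeEdist u₀ u₁ a = k, G.edgeTestVec u₀ u₁ s k a ^ 2 := by
  have hd : 1 ≤ d := (G.degree_pos_iff_exists_adj u₀).mpr ⟨u₁, he⟩ |>.trans_le (hdeg u₀)
  rw [sum_filter, mul_sum]
  refine sum_le_sum fun a _ => ?_
  rw [← sum_filter, sum_const, nsmul_eq_mul, ← filter_filter, ← neighborFinset_eq_filter]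
  by_cases hx : G.edgeTestVec u₀ u₁ s k a = 0
  · simp [hx]
  obtain ⟨ℓ, hℓ, hℓk⟩ := ENat.le_natCast_iff.mp (le_of_decayProfile_ne_zero hx)
  rcases hℓk.eq_or_lt with rfl | hlt
  · have hcard := card_filter_neighborFinset_lt_edgeEdist_le he (hdeg a) hℓ
    rw [if_pos hℓ]
    refine mul_le_mul_of_nonneg_right ?_ (sq_nonneg _)
    rw [← Nat.cast_pred hd]
    exact_mod_cast hcard
  · have hd' : (0 : ℝ) ≤ d - 1 := by rw [sub_nonneg]; exact_mod_cast hd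
    rw [filter_eq_empty_iff.mpr fun b hb => ?_, card_empty, Nat.cast_zero, zero_mul]
    · positivity
    · refine not_lt.mpr <| (edgeEdist_le_add_one_of_adj ((G.mem_neighborFinset a b).mp hb)).trans ?_
      rw [hℓ]
      exact_mod_cast hlt

variable [DecidableEq V]

theorem edgeTestVec_rayleigh_le (hs0 : 0 < s) (hs : s ^ 2 = d - 1) (he : G.Adj u₀ u₁)
    (hdeg : ∀ v, G.degree v ≤ d) {μ : ℝ}
    (hμ : ∀ z, z ⬝ᵥ (G.lapMatrix ℝ *ᵥ z) ≤ μ * (z ⬝ᵥ z)) :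
    G.edgeTestVec u₀ u₁ s k ⬝ᵥ (G.lapMatrix ℝ *ᵥ G.edgeTestVec u₀ u₁ s k) ≤
      (((s - 1) / (s + 1)) ^ 2 * μ + (1 - ((s - 1) / (s + 1)) ^ 2) * (d - 1) / (k + 1)) *
        (G.edgeTestVec u₀ u₁ s k ⬝ᵥ G.edgeTestVec u₀ u₁ s k) := by
  have hA : 0 ≤ 1 - ((s - 1) / (s + 1)) ^ 2 := by
    rw [sub_nonneg, div_pow, div_le_one (by positivity)]
    nlinarith
  set A := ((s - 1) / (s + 1)) ^ 2
  set x := G.edgeTestVec u₀ u₁ s k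
  set y := G.altEdgeTestVec u₀ u₁ s k
  have hd : (0 : ℝ) ≤ d - 1 := hs ▸ sq_nonneg s
  have hyy : y ⬝ᵥ y = x ⬝ᵥ x := by
    simp only [dotProduct, ← sq, y, x, altEdgeTestVec, edgeTestVec, altDecayProfile_sq]
  have hy := hμ y
  rw [dotProduct_lapMatrix_mulVec, hyy] at hy
  have hmass : ∑ a with G.edgeEdist u₀ u₁ a = k, x a ^ 2 ≤ (x ⬝ᵥ x) / (k + 1) := by
    rw [le_div_iff₀ (by positivity), mul_comm]
    exact succ_mul_sum_level_sq_edgeTestVec_le hs0 hs he hdeg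
  rw [dotProduct_lapMatrix_mulVec]
  calc _ ≤ A * ((∑ a, ∑ b, if G.Adj a b then (y a - y b) ^ 2 else 0) / 2) + (1 - A) *
        ∑ a, ∑ b, (if G.Adj a b ∧ (k : ℕ∞) < G.edgeEdist u₀ u₁ b then x a ^ 2 else 0) := by
        linarith [sum_adj_sq_sub_edgeTestVec_le (G := G) (u₀ := u₀) (u₁ := u₁) (k := k) hs0]
    _ ≤ A * (μ * (x ⬝ᵥ x)) + (1 - A) * ((d - 1) * ((x ⬝ᵥ x) / (k + 1))) := by
        refine add_le_add (mul_le_mul_of_nonneg_left hy (by positivity)) ?_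
        exact mul_le_mul_of_nonneg_left
          ((sum_adj_boundary_le he hdeg).trans (mul_le_mul_of_nonneg_left hmass hd)) hA
    _ = _ := by ring

end EdgeTestVec

end SimpleGraph

lemma rayleigh_bound_div_lt {d s μ : ℝ} (k : ℕ) (hs0 : 0 < s) (hs : s ^ 2 = d - 1)
    (hμ : d ≤ μ) :
    (((s - 1) / (s + 1)) ^ 2 * μ + (1 - ((s - 1) / (s + 1)) ^ 2) * (d - 1) / (k + 1)) / μ <
      (d - 2 * s) / (d + 2 * s) + 4 / ((k + 1) * s) := by
  have hA : ((s - 1) / (s + 1)) ^ 2 = (d - 2 * s) / (d + 2 * s) := by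
    rw [div_pow]; congr 1 <;> linear_combination hs
  have hμ0 : 0 < μ := by nlinarith
  have hds : 0 < d + 2 * s := by nlinarith
  rw [hA, div_lt_iff₀ hμ0, add_mul, add_lt_add_iff_left, one_sub_div hds.ne',
    div_mul_eq_mul_div _ _ μ, div_lt_div_iff₀ (by positivity) (by positivity)]
  field_simp
  nlinarith [mul_pos hs0 hds]

theorem stmt9_general {n : ℕ} (d k : ℕ) (hd : 2 ≤ d)
    (G : SimpleGraph (Fin n)) (hreg : G.IsRegularOfDegree d)
    (u₀ u₁ v₀ v₁ : Fin n) (he : G.Adj u₀ u₁) (hf : G.Adj v₀ v₁)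
    (h00 : ((2 * k + 2 : ℕ) : ℕ∞) ≤ G.edist u₀ v₀)
    (h01 : ((2 * k + 2 : ℕ) : ℕ∞) ≤ G.edist u₀ v₁)
    (h10 : ((2 * k + 2 : ℕ) : ℕ∞) ≤ G.edist u₁ v₀)
    (h11 : ((2 * k + 2 : ℕ) : ℕ∞) ≤ G.edist u₁ v₁) :
    lapEig G 2 / lapEig G n <
      ((d : ℝ) - 2 * Real.sqrt ((d : ℝ) - 1)) / ((d : ℝ) + 2 * Real.sqrt ((d : ℝ) - 1)) +
        4 / (((k : ℝ) + 1) * Real.sqrt ((d : ℝ) - 1)) := by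
  have hn : 1 < n := by
    by_contra h
    exact he.ne (Fin.ext (by omega))
  set s := Real.sqrt ((d : ℝ) - 1)
  have hd' : (1 : ℝ) < d := by exact_mod_cast hd
  have hs0 : 0 < s := Real.sqrt_pos.mpr (by linarith)
  have hs : s ^ 2 = d - 1 := Real.sq_sqrt (by linarith)
  have hdeg : ∀ v, G.degree v ≤ d := fun v => (hreg v).le
  have hμ := G.dotProduct_lapMatrix_mulVec_le_lapEig_last (by omega)
  have hfar : ((2 * k + 2 : ℕ) : ℕ∞) ≤ G.edgeEdist u₀ u₁ v₀ ⊓ G.edgeEdist u₀ u₁ v₁ :=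
    le_min (le_min h00 h10) (le_min h01 h11)
  have hsecond := lapEig_two_le_of_disjoint hn
    (one_pos.trans_le one_le_dotProduct_self_edgeTestVec)
    (one_pos.trans_le one_le_dotProduct_self_edgeTestVec)
    (fun a b hab => edgeTestVec_mul_edgeTestVec_eq_zero hfar hab)
    (edgeTestVec_rayleigh_le hs0 hs he hdeg hμ) (edgeTestVec_rayleigh_le hs0 hs hf hdeg hμ)
  have hlast : (d : ℝ) ≤ lapEig G n := (hreg u₀) ▸ G.degree_le_lapEig_last u₀
  exact (div_le_div_of_nonneg_right hsecond (by linarith)).trans_lt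
    (rayleigh_bound_div_lt k hs0 hs hlast)

/-- Let `d ≥ 2`, `k ≥ 1`, and let `G` be an `n`-vertex `d`-regular graph
containing two edges `u₀u₁` and `v₀v₁` at distance at least `2k+2` (all four endpoint
distances, measured in `ℕ∞`, are at least `2k+2`). Then
`λ₂(G)/λₙ(G) < (d-2√(d-1))/(d+2√(d-1)) + 4/((k+1)√(d-1))`. -/
theorem stmt9 {n : ℕ} (d k : ℕ) (hd : 2 ≤ d) (hk : 1 ≤ k)
    (G : SimpleGraph (Fin n)) (hreg : G.IsRegularOfDegree d)
    (u₀ u₁ v₀ v₁ : Fin n) (he : G.Adj u₀ u₁) (hf : G.Adj v₀ v₁)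
    (h00 : ((2 * k + 2 : ℕ) : ℕ∞) ≤ G.edist u₀ v₀)
    (h01 : ((2 * k + 2 : ℕ) : ℕ∞) ≤ G.edist u₀ v₁)
    (h10 : ((2 * k + 2 : ℕ) : ℕ∞) ≤ G.edist u₁ v₀)
    (h11 : ((2 * k + 2 : ℕ) : ℕ∞) ≤ G.edist u₁ v₁) :
    lapEig G 2 / lapEig G n <
      ((d : ℝ) - 2 * Real.sqrt ((d : ℝ) - 1)) / ((d : ℝ) + 2 * Real.sqrt ((d : ℝ) - 1)) +
        4 / (((k : ℝ) + 1) * Real.sqrt ((d : ℝ) - 1)) :=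
  stmt9_general d k hd G hreg u₀ u₁ v₀ v₁ he hf h00 h01 h10 h11
end

section
/- Let s ≥ 1 and k ≥ 1 be integers, let d ≥ 5 be an integer, and let G be an n-vertex d-regular graph containing 2s + 1 distinct vertices whose pairwise graph distances are all at least 4k. Then (√(d−1) + 2) · μ_{s+1}(G) − (√(d−1) − 2) · μ_{n−s+1}(G) ≥ 4(d−1)·cos(π/(2k)). -/
/-!
Write `ρ = √(d-1)` and `θ = π/(2k)`. Around a vertex `u` put the radial test vector
`F_u(x) = ρ^{-t} sin((t+1)θ)` for `t = dist(u,x) ≤ 2k-2` (and `0` further out), and its twin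
`F'_u(x) = (-1)^t F_u(x)`. On an edge inside a sphere around `u` the two quadratic forms combine
to `4 F F`, on an edge between consecutive spheres to `2ρ F F`; with the recurrence
`f_{t-1} + ρ² f_{t+1} = 2ρ cos θ f_t` of the profile and `d`-regularity this gives
`(ρ+2)⟨F,AF⟩ - (ρ-2)⟨F',AF'⟩ ≥ 4ρ² cos θ ‖F‖²`.

The balls around the `2s+1` given vertices have disjoint, non-adjacent supports, so both families
of test vectors are orthogonal for `1` and for `A`. A median argument picks a centre `i` such that
`s+1` of the `F`'s have Rayleigh quotient at least that of `F_i` and `s+1` of the `F'`'s have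
Rayleigh quotient at most that of `F'_i`. By the min-max principle `μ_{s+1} ≥ R(F_i)` and
`μ_{n-s+1} ≤ R(F'_i)`, and `ρ ≥ 2` lets the two bounds be combined.
-/

open Matrix SimpleGraph

attribute [local instance] Classical.propDecidable

open Finset

section BallProfile

open Real

theorem sin_add_le_two_mul_sin {x y : ℝ} (hy : 0 ≤ y) (hyx : y ≤ x) (hx : x ≤ π) :
    sin (x + y) ≤ 2 * sin x := by
  have hsx : 0 ≤ sin x := sin_nonneg_of_nonneg_of_le_pi (hy.trans hyx) hx
  have hsy : 0 ≤ sin y := sin_nonneg_of_nonneg_of_le_pi hy (hyx.trans hx)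
  rw [sin_add]
  rcases le_or_gt (cos x) 0 with hcx | hcx
  · nlinarith [cos_le_one y]
  · have hx' : x ≤ π / 2 := by
      by_contra! h
      linarith [cos_nonpos_of_pi_div_two_le_of_le h.le (by linarith : x ≤ π + π / 2)]
    have : sin y ≤ sin x := sin_le_sin_of_le_of_le_pi_div_two (by linarith) hx' hyx
    nlinarith [cos_le_one y, cos_le_one x]

/- With `ρ = √(d-1)` this is the radial eigenfunction of the `d`-regular tree with eigenvalue
`2ρ cos (π / (R + 2))` that vanishes at distance `R + 1` (see `ballProfile_recurrence`). -/
noncomputable def ballProfile (ρ : ℝ) (R t : ℕ) : ℝ := ρ⁻¹ ^ t * sin ((t + 1) * (π / (R + 2)))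

variable {ρ : ℝ} {R t : ℕ}

lemma natCast_mul_pi_div_le_pi {m : ℕ} (hm : m ≤ R + 2) : (m : ℝ) * (π / (R + 2)) ≤ π := by
  rw [mul_div_assoc', div_le_iff₀ (by positivity)]
  exact mul_le_mul_of_nonneg_right (by exact_mod_cast hm) pi_pos.le |>.trans_eq (mul_comm _ _)

lemma natCast_mul_pi_div_lt_pi {m : ℕ} (hm : m < R + 2) : (m : ℝ) * (π / (R + 2)) < π := by
  rw [mul_div_assoc', div_lt_iff₀ (by positivity)]
  exact mul_lt_mul_of_pos_right (by exact_mod_cast hm) pi_pos |>.trans_eq (mul_comm _ _)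

lemma ballProfile_nonneg (hρ : 0 ≤ ρ) (ht : t ≤ R + 1) : 0 ≤ ballProfile ρ R t := by
  refine mul_nonneg (by positivity) (sin_nonneg_of_nonneg_of_le_pi (by positivity) ?_)
  exact_mod_cast natCast_mul_pi_div_le_pi (m := t + 1) (by omega)

lemma ballProfile_pos (hρ : 0 < ρ) (ht : t ≤ R) : 0 < ballProfile ρ R t := by
  refine mul_pos (by positivity) (sin_pos_of_pos_of_lt_pi (by positivity) ?_)
  exact_mod_cast natCast_mul_pi_div_lt_pi (m := t + 1) (by omega)

lemma ballProfile_radius_succ : ballProfile ρ R (R + 1) = 0 := by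
  simp only [ballProfile]
  push_cast
  rw [show ((R : ℝ) + 1 + 1) = R + 2 by ring, mul_div_cancel₀ _ (by positivity), sin_pi, mul_zero]

lemma ballProfile_recurrence (hρ : ρ ≠ 0) (t : ℕ) :
    ballProfile ρ R t + ρ ^ 2 * ballProfile ρ R (t + 2) =
      2 * ρ * cos (π / (R + 2)) * ballProfile ρ R (t + 1) := by
  set θ := π / (R + 2)
  have hsin : sin ((t + 2 + 1) * θ) + sin ((t + 1) * θ) = 2 * cos θ * sin ((t + 1 + 1) * θ) := by
    rw [show (t + 2 + 1) * θ = (t + 1 + 1) * θ + θ by ring,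
      show (t + 1) * θ = (t + 1 + 1) * θ - θ by ring, sin_add, sin_sub]
    ring
  have hρρ : ρ * ρ⁻¹ = 1 := mul_inv_cancel₀ hρ
  simp only [ballProfile, pow_succ]
  push_cast
  linear_combination ρ⁻¹ ^ t * hsin + ρ⁻¹ ^ t * ((ρ * ρ⁻¹ + 1) * sin ((t + 2 + 1) * θ)
    - 2 * cos θ * sin ((t + 1 + 1) * θ)) * hρρ

lemma ballProfile_succ_le (hρ : 0 < ρ) (ht : t + 1 ≤ R + 1) :
    ρ * ballProfile ρ R (t + 1) ≤ 2 * ballProfile ρ R t := by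
  have hθ : 0 ≤ π / (R + 2) := by positivity
  have hsin : sin ((t + 1) * (π / (R + 2)) + π / (R + 2)) ≤ 2 * sin ((t + 1) * (π / (R + 2))) :=
    sin_add_le_two_mul_sin hθ (le_mul_of_one_le_left hθ (by linarith [t.cast_nonneg (α := ℝ)]))
      (by exact_mod_cast natCast_mul_pi_div_le_pi (m := t + 1) (by omega))
  simp only [ballProfile, pow_succ]
  push_cast
  rw [show ((t : ℝ) + 1 + 1) * (π / (R + 2)) = (t + 1) * (π / (R + 2)) + π / (R + 2) by ring]
  calc ρ * (ρ⁻¹ ^ t * ρ⁻¹ * sin ((t + 1) * (π / (R + 2)) + π / (R + 2)))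
      = ρ⁻¹ ^ t * sin ((t + 1) * (π / (R + 2)) + π / (R + 2)) := by field_simp
    _ ≤ ρ⁻¹ ^ t * (2 * sin ((t + 1) * (π / (R + 2)))) := by gcongr
    _ = _ := by ring

lemma ballProfile_add_two_le (hρ : 2 ≤ ρ) (ht : t + 2 ≤ R + 1) :
    ballProfile ρ R (t + 2) ≤ ballProfile ρ R t := by
  have h1 : ρ * ballProfile ρ R (t + 2) ≤ 2 * ballProfile ρ R (t + 1) :=
    ballProfile_succ_le (by linarith) ht
  have h2 : ρ * ballProfile ρ R (t + 1) ≤ 2 * ballProfile ρ R t :=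
    ballProfile_succ_le (by linarith) (by omega)
  have h0 : 0 ≤ ballProfile ρ R (t + 2) := ballProfile_nonneg (by linarith) ht
  nlinarith [mul_le_mul_of_nonneg_left h1 (by linarith : (0 : ℝ) ≤ ρ),
    mul_nonneg (mul_nonneg (by linarith : (0 : ℝ) ≤ ρ - 2) (by linarith : (0 : ℝ) ≤ ρ + 2)) h0]

lemma two_mul_cos_mul_ballProfile_zero_le (hρ : 0 < ρ) :
    2 * ρ * cos (π / (R + 2)) * ballProfile ρ R 0 ≤ (ρ ^ 2 + 1) * ballProfile ρ R 1 := by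
  have hθ : 0 ≤ π / (R + 2) := by positivity
  have hθ' : π / (R + 2) ≤ π / 2 :=
    div_le_div_of_nonneg_left pi_pos.le two_pos (by linarith [R.cast_nonneg (α := ℝ)])
  have hs : 0 ≤ sin (π / (R + 2)) := sin_nonneg_of_nonneg_of_le_pi hθ (by linarith [pi_pos])
  have hc : 0 ≤ cos (π / (R + 2)) := cos_nonneg_of_mem_Icc ⟨by linarith [pi_pos], hθ'⟩
  simp only [ballProfile, pow_zero, pow_one, one_mul, Nat.cast_zero, Nat.cast_one, zero_add]
  rw [show ((1 : ℝ) + 1) * (π / (R + 2)) = 2 * (π / (R + 2)) by ring, sin_two_mul]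
  field_simp
  nlinarith [mul_nonneg hs hc]

end BallProfile

section Spectral

variable {ι κ κ' : Type*} [Fintype ι]

structure IsOrthogonalFamily (A : Matrix ι ι ℝ) (F : κ → ι → ℝ) : Prop where
  ne_zero : ∀ i, F i ≠ 0
  orthogonal : Pairwise fun i j => F i ⬝ᵥ F j = 0
  orthogonal_mulVec : Pairwise fun i j => F i ⬝ᵥ (A *ᵥ F j) = 0

lemma IsOrthogonalFamily.comp {A : Matrix ι ι ℝ} {F : κ → ι → ℝ} (hF : IsOrthogonalFamily A F)
    {g : κ' → κ} (hg : Function.Injective g) : IsOrthogonalFamily A (F ∘ g) :=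
  ⟨fun i => hF.ne_zero (g i), fun _ _ hij => hF.orthogonal (hg.ne hij),
    fun _ _ hij => hF.orthogonal_mulVec (hg.ne hij)⟩

lemma IsOrthogonalFamily.neg {A : Matrix ι ι ℝ} {F : κ → ι → ℝ} (hF : IsOrthogonalFamily A F) :
    IsOrthogonalFamily (-A) F :=
  ⟨hF.ne_zero, hF.orthogonal, fun _ _ hij => by
    dsimp only
    rw [neg_mulVec, dotProduct_neg, hF.orthogonal_mulVec hij, neg_zero]⟩

noncomputable def rayleigh (A : Matrix ι ι ℝ) (x : ι → ℝ) : ℝ := x ⬝ᵥ (A *ᵥ x) / (x ⬝ᵥ x)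

variable [Fintype κ]

lemma sum_smul_dotProduct_mulVec_sum_smul {B : Matrix ι ι ℝ} {F : κ → ι → ℝ}
    (hF : Pairwise fun i j => F i ⬝ᵥ (B *ᵥ F j) = 0) (c : κ → ℝ) :
    (∑ i, c i • F i) ⬝ᵥ (B *ᵥ ∑ i, c i • F i) = ∑ i, c i ^ 2 * (F i ⬝ᵥ (B *ᵥ F i)) := by
  simp only [mulVec_sum, mulVec_smul, sum_dotProduct, dotProduct_sum, smul_dotProduct,
    dotProduct_smul, smul_eq_mul]
  refine sum_congr rfl fun i _ => ?_
  rw [sum_eq_single i (fun j _ hji => by simp [hF hji]) (by simp)]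
  ring

lemma dotProduct_mulVec_eq_sum_eigen {A : Matrix ι ι ℝ}
    (e : OrthonormalBasis ι ℝ (EuclideanSpace ℝ ι)) {μ : ι → ℝ}
    (he : ∀ j, A *ᵥ ⇑(e j) = μ j • ⇑(e j)) (h : ι → ℝ) :
    h ⬝ᵥ (A *ᵥ h) = ∑ j, μ j * (⇑(e j) ⬝ᵥ h) ^ 2 := by
  have hrepr : h = ∑ j, (⇑(e j) ⬝ᵥ h) • ⇑(e j) := by
    simpa [EuclideanSpace.inner_eq_star_dotProduct, dotProduct_comm] using
      congrArg WithLp.ofLp (e.sum_repr' (WithLp.toLp 2 h)).symm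
  have hA : A *ᵥ h = ∑ j, (μ j * (⇑(e j) ⬝ᵥ h)) • ⇑(e j) := by
    conv_lhs => rw [hrepr]
    simp only [mulVec_sum, mulVec_smul, he, smul_smul, mul_comm]
  rw [hA, dotProduct_sum]
  refine sum_congr rfl fun j _ => ?_
  rw [dotProduct_smul, smul_eq_mul, dotProduct_comm h]
  ring

lemma exists_ne_zero_forall_dotProduct_sum_smul_eq_zero {τ : Type*} [Fintype τ]
    (w : τ → ι → ℝ) (F : κ → ι → ℝ) (h : Fintype.card τ < Fintype.card κ) :
    ∃ c : κ → ℝ, c ≠ 0 ∧ ∀ t, w t ⬝ᵥ ∑ i, c i • F i = 0 := by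
  let M : Matrix τ κ ℝ := Matrix.of fun t i => w t ⬝ᵥ F i
  obtain ⟨c, hc, hc0⟩ := Submodule.exists_mem_ne_zero_of_ne_bot
    (LinearMap.ker_ne_bot_of_finrank_lt (f := M.mulVecLin) (by simpa using h))
  refine ⟨c, hc0, fun t => ?_⟩
  have := congrFun (LinearMap.mem_ker.1 hc) t
  simp only [dotProduct_sum, dotProduct_smul, smul_eq_mul]
  simpa [M, mulVec, dotProduct, mul_comm] using this

lemma dotProduct_self_nonneg (v : ι → ℝ) : 0 ≤ v ⬝ᵥ v :=
  sum_nonneg fun i _ => mul_self_nonneg (v i)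

lemma dotProduct_self_pos {v : ι → ℝ} (hv : v ≠ 0) : 0 < v ⬝ᵥ v :=
  (dotProduct_self_nonneg v).lt_of_ne' (dotProduct_self_eq_zero.not.2 hv)

theorem card_le_card_filter_le_of_isOrthogonalFamily {A : Matrix ι ι ℝ}
    (e : OrthonormalBasis ι ℝ (EuclideanSpace ℝ ι)) {μ : ι → ℝ}
    (he : ∀ j, A *ᵥ ⇑(e j) = μ j • ⇑(e j)) {F : κ → ι → ℝ} (hF : IsOrthogonalFamily A F)
    {α : ℝ} (hα : ∀ i, α * (F i ⬝ᵥ F i) ≤ F i ⬝ᵥ (A *ᵥ F i)) :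
    Fintype.card κ ≤ #{j | α ≤ μ j} := by
  by_contra! hlt
  obtain ⟨c, hc0, hc⟩ := exists_ne_zero_forall_dotProduct_sum_smul_eq_zero
    (fun j : {j // α ≤ μ j} => ⇑(e j)) F (by rwa [Fintype.card_subtype])
  set h := ∑ i, c i • F i
  have hself : h ⬝ᵥ h = ∑ i, c i ^ 2 * (F i ⬝ᵥ F i) := by
    simpa using sum_smul_dotProduct_mulVec_sum_smul (B := 1) (F := F)
      (fun i j hij => by simpa using hF.orthogonal hij) c
  have hpos : 0 < h ⬝ᵥ h := by
    obtain ⟨i, hi⟩ := Function.ne_iff.1 hc0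
    rw [hself]
    refine sum_pos' (fun j _ => mul_nonneg (sq_nonneg _) (dotProduct_self_nonneg _)) ?_
    exact ⟨i, mem_univ _,
      mul_pos (pow_two_pos_of_ne_zero hi) (dotProduct_self_pos (hF.ne_zero i))⟩
  have hge : α * (h ⬝ᵥ h) ≤ h ⬝ᵥ (A *ᵥ h) := by
    rw [hself, sum_smul_dotProduct_mulVec_sum_smul hF.orthogonal_mulVec, mul_sum]
    refine sum_le_sum fun i _ => ?_
    nlinarith [hα i, sq_nonneg (c i)]
  have hself' : h ⬝ᵥ h = ∑ j, (⇑(e j) ⬝ᵥ h) ^ 2 := by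
    simpa using dotProduct_mulVec_eq_sum_eigen (A := 1) e (μ := 1) (by simp) h
  -- `h` is orthogonal to the eigenvectors with eigenvalue at least `α`
  have hlt : h ⬝ᵥ (A *ᵥ h) < α * (h ⬝ᵥ h) := by
    obtain ⟨j, -, hj⟩ := exists_ne_zero_of_sum_ne_zero (hself' ▸ hpos.ne')
    have hμ : ∀ j, (⇑(e j) ⬝ᵥ h) ^ 2 ≠ 0 → μ j < α := fun j hj => by
      by_contra! hαμ
      exact hj (by rw [hc ⟨j, hαμ⟩, sq, mul_zero])
    rw [dotProduct_mulVec_eq_sum_eigen e he, hself', mul_sum]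
    refine sum_lt_sum (fun i _ => ?_) ⟨j, mem_univ _, ?_⟩
    · by_cases hi : (⇑(e i) ⬝ᵥ h) ^ 2 = 0
      · simp [hi]
      · exact mul_le_mul_of_nonneg_right (hμ i hi).le (sq_nonneg _)
    · exact mul_lt_mul_of_pos_right (hμ j hj) ((sq_nonneg _).lt_of_ne' hj)
  linarith

end Spectral

section SortedEigs

variable {n : ℕ} {κ : Type*} [Fintype κ]

lemma Monotone.le_of_le_add_card_filter_le {f : Fin n → ℝ} (hf : Monotone f) {α : ℝ}
    {i : Fin n} (hi : n ≤ i + #{j | α ≤ f j}) : α ≤ f i := by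
  by_contra! hfi
  have hsub : ({j | α ≤ f j} : Finset (Fin n)) ⊆ Ioi i := fun j hj =>
    mem_Ioi.2 (lt_of_not_ge fun hji => (hfi.trans_le (mem_filter.1 hj).2).not_ge (hf hji))
  have := card_le_card hsub
  rw [Fin.card_Ioi] at this
  omega

lemma Monotone.le_of_lt_card_filter_le {f : Fin n → ℝ} (hf : Monotone f) {α : ℝ}
    {i : Fin n} (hi : i < #{j | f j ≤ α}) : f i ≤ α := by
  by_contra! hfi
  have hsub : ({j | f j ≤ α} : Finset (Fin n)) ⊆ Iio i := fun j hj =>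
    mem_Iio.2 (lt_of_not_ge fun hij => ((mem_filter.1 hj).2.trans_lt hfi).not_ge (hf hij))
  have := card_le_card hsub
  rw [Fin.card_Iio] at this
  omega

variable {A : Matrix (Fin n) (Fin n) ℝ}

lemma sortedEigs_eq (hA : A.IsHermitian) :
    sortedEigs A = hA.eigenvalues ∘ Tuple.sort hA.eigenvalues :=
  dif_pos hA

lemma monotone_sortedEigs (hA : A.IsHermitian) : Monotone (sortedEigs A) :=
  sortedEigs_eq hA ▸ Tuple.monotone_sort _

lemma card_filter_sortedEigs (hA : A.IsHermitian) (p : ℝ → Prop) [DecidablePred p] :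
    #{j | p (sortedEigs A j)} = #{j | p (hA.eigenvalues j)} := by
  simp only [← Fintype.card_subtype, sortedEigs_eq hA, Function.comp_apply]
  exact Fintype.card_congr ((Tuple.sort hA.eigenvalues).subtypeEquiv fun _ => Iff.rfl)

theorem le_sortedEigs_of_isOrthogonalFamily (hA : A.IsHermitian) {F : κ → Fin n → ℝ}
    (hF : IsOrthogonalFamily A F) {α : ℝ} (hα : ∀ i, α ≤ rayleigh A (F i)) {j : Fin n}
    (hj : n ≤ j + Fintype.card κ) : α ≤ sortedEigs A j := by
  refine (monotone_sortedEigs hA).le_of_le_add_card_filter_le (hj.trans ?_)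
  rw [card_filter_sortedEigs hA (α ≤ ·)]
  gcongr
  refine card_le_card_filter_le_of_isOrthogonalFamily hA.eigenvectorBasis
    hA.mulVec_eigenvectorBasis hF fun i => ?_
  exact (le_div_iff₀ (dotProduct_self_pos (hF.ne_zero i))).1 (hα i)

theorem sortedEigs_le_of_isOrthogonalFamily (hA : A.IsHermitian) {F : κ → Fin n → ℝ}
    (hF : IsOrthogonalFamily A F) {α : ℝ} (hα : ∀ i, rayleigh A (F i) ≤ α) {j : Fin n}
    (hj : j < Fintype.card κ) : sortedEigs A j ≤ α := by
  refine (monotone_sortedEigs hA).le_of_lt_card_filter_le (hj.trans_le ?_)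
  rw [card_filter_sortedEigs hA (· ≤ α)]
  have := card_le_card_filter_le_of_isOrthogonalFamily (μ := -hA.eigenvalues) (α := -α)
    hA.eigenvectorBasis (fun j => by simp [neg_mulVec, hA.mulVec_eigenvectorBasis]) hF.neg
    fun i => ?_
  · simpa using this
  · have := (div_le_iff₀ (dotProduct_self_pos (hF.ne_zero i))).1 (hα i)
    simp only [neg_mulVec, dotProduct_neg]
    linarith

end SortedEigs

section Median

variable {κ α : Type*} [Fintype κ] [LinearOrder α]

lemma card_lt_add_card_filter_le_card_filter_le (x : κ → α) {m : ℕ} (hm : 1 ≤ m) :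
    Fintype.card κ < m + #{i | m ≤ #{j | x i ≤ x j}} := by
  by_contra! h
  set S : Finset κ := {i | m ≤ #{j | x i ≤ x j}}
  have hC : m ≤ #Sᶜ := by rw [card_compl]; omega
  obtain ⟨i, hiC, hmin⟩ := exists_min_image Sᶜ x (card_pos.1 (by omega))
  refine mem_compl.1 hiC (mem_filter.2 ⟨mem_univ _, hC.trans (card_le_card fun j hj => ?_)⟩)
  exact mem_filter.2 ⟨mem_univ _, hmin j hj⟩

lemma exists_le_card_filter_le_and_le_card_filter_ge {s : ℕ} (hκ : Fintype.card κ = 2 * s + 1)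
    (x y : κ → ℝ) : ∃ i, s + 1 ≤ #{j | x i ≤ x j} ∧ s + 1 ≤ #{j | y j ≤ y i} := by
  have hx := card_lt_add_card_filter_le_card_filter_le x (m := s + 1) (by omega)
  have hy := card_lt_add_card_filter_le_card_filter_le (-y) (m := s + 1) (by omega)
  simp only [Pi.neg_apply, neg_le_neg_iff] at hy
  set S : Finset κ := {i | s + 1 ≤ #{j | x i ≤ x j}}
  set T : Finset κ := {i | s + 1 ≤ #{j | y j ≤ y i}}
  have hST := card_union_add_card_inter S T
  have := card_le_univ (S ∪ T)
  obtain ⟨i, hi⟩ := card_pos.1 (by omega : 0 < #(S ∩ T))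
  simp only [S, T, mem_inter, mem_filter, mem_univ, true_and] at hi
  exact ⟨i, hi⟩

end Median

theorem exists_rayleigh_le_sortedEigs_and_sortedEigs_le_rayleigh {n s : ℕ} {κ : Type*}
    [Fintype κ] {A : Matrix (Fin n) (Fin n) ℝ} (hA : A.IsHermitian) {F F' : κ → Fin n → ℝ}
    (hκ : Fintype.card κ = 2 * s + 1) (hF : IsOrthogonalFamily A F)
    (hF' : IsOrthogonalFamily A F') {j₁ j₂ : Fin n} (hj₁ : n ≤ j₁ + (s + 1))
    (hj₂ : j₂ < s + 1) :
    ∃ i, rayleigh A (F i) ≤ sortedEigs A j₁ ∧ sortedEigs A j₂ ≤ rayleigh A (F' i) := by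
  obtain ⟨i, hup, hdown⟩ := exists_le_card_filter_le_and_le_card_filter_ge hκ
    (fun i => rayleigh A (F i)) (fun i => rayleigh A (F' i))
  refine ⟨i, le_sortedEigs_of_isOrthogonalFamily hA
      (hF.comp (Subtype.val_injective (p := fun j => rayleigh A (F i) ≤ rayleigh A (F j))))
      (fun j => j.2) ?_, sortedEigs_le_of_isOrthogonalFamily hA
      (hF'.comp (Subtype.val_injective (p := fun j => rayleigh A (F' j) ≤ rayleigh A (F' i))))
      (fun j => j.2) ?_⟩
  · rw [Fintype.card_subtype]; omega
  · rw [Fintype.card_subtype]; omega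

section BallVec

open Real

variable {V κ : Type*} (G : SimpleGraph V)

-- The cutoff is tested on `edist` because `G.dist` is `0` between unreachable vertices.
noncomputable def ballVec (ρ : ℝ) (R : ℕ) (u x : V) : ℝ :=
  if G.edist u x ≤ R then ballProfile ρ R (G.dist u x) else 0

noncomputable def altBallVec (ρ : ℝ) (R : ℕ) (u x : V) : ℝ :=
  (-1) ^ G.dist u x * ballVec G ρ R u x

noncomputable def edgeTerm (ρ : ℝ) (R : ℕ) (u x y : V) : ℝ :=
  (ρ + 2) * (ballVec G ρ R u x * ballVec G ρ R u y) -
    (ρ - 2) * (altBallVec G ρ R u x * altBallVec G ρ R u y)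

variable {G} {ρ : ℝ} {R : ℕ} {u x y : V}

lemma exists_adj_dist_eq (hux : G.Reachable u x) {r : ℕ} (hx : G.dist u x = r + 1) :
    ∃ y, G.Adj y x ∧ G.dist u y = r := by
  obtain ⟨p, hp⟩ := hux.exists_walk_length_eq_dist
  have hnil : ¬p.Nil := fun h => by simp [h.length_eq_zero] at hp; omega
  have hadj := p.adj_penultimate hnil
  have hlen : p.dropLast.length = r := by
    have := congrArg Walk.length (p.concat_dropLast hadj)
    rw [Walk.length_concat] at this
    omega
  refine ⟨p.penultimate, hadj, le_antisymm (hlen ▸ dist_le p.dropLast) ?_⟩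
  rcases hadj.diff_dist_adj (u := u) with h | h | h <;> omega

lemma ballVec_of_dist_le (hux : G.Reachable u x) (hx : G.dist u x ≤ R + 1) :
    ballVec G ρ R u x = ballProfile ρ R (G.dist u x) := by
  unfold ballVec
  rw [← hux.coe_dist_eq_edist, Nat.cast_le]
  split_ifs with h
  · rfl
  · rw [show G.dist u x = R + 1 by omega, ballProfile_radius_succ]

lemma edist_le_of_ballVec_ne_zero (h : ballVec G ρ R u x ≠ 0) : G.edist u x ≤ R := by
  by_contra h'
  exact h (if_neg h')

lemma reachable_and_dist_le_of_ballVec_ne_zero (h : ballVec G ρ R u x ≠ 0) :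
    G.Reachable u x ∧ G.dist u x ≤ R := by
  have he := edist_le_of_ballVec_ne_zero h
  have hr : G.Reachable u x := reachable_of_edist_ne_top (ne_top_of_le_ne_top (by simp) he)
  exact ⟨hr, by rwa [← hr.coe_dist_eq_edist, Nat.cast_le] at he⟩

lemma ballVec_self : ballVec G ρ R u u = ballProfile ρ R 0 := by
  simp [ballVec]

lemma ballVec_ne_zero (hρ : 0 < ρ) (u : V) : ballVec G ρ R u ≠ 0 := fun h =>
  (ballProfile_pos hρ R.zero_le).ne' (ballVec_self.symm.trans (congrFun h u))

lemma altBallVec_ne_zero (hρ : 0 < ρ) (u : V) : altBallVec G ρ R u ≠ 0 := fun h =>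
  (ballProfile_pos hρ R.zero_le).ne' <| by
    simpa [altBallVec, ballVec_self] using congrFun h u

lemma altBallVec_mul_altBallVec (u₁ u₂ x y : V) :
    altBallVec G ρ R u₁ x * altBallVec G ρ R u₂ y =
      (-1) ^ (G.dist u₁ x + G.dist u₂ y) * (ballVec G ρ R u₁ x * ballVec G ρ R u₂ y) := by
  rw [altBallVec, altBallVec, pow_add]
  ring

lemma ballVec_mul_ballVec_eq_zero {u₁ u₂ x y : V}
    (hsep : ((2 * R + 2 : ℕ) : ℕ∞) ≤ G.edist u₁ u₂) (hxy : G.edist x y ≤ 1) :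
    ballVec G ρ R u₁ x * ballVec G ρ R u₂ y = 0 := by
  by_contra h
  obtain ⟨h₁, h₂⟩ := mul_ne_zero_iff.1 h
  have := calc
    G.edist u₁ u₂ ≤ G.edist u₁ x + (G.edist x y + G.edist y u₂) :=
      SimpleGraph.edist_triangle.trans (add_le_add le_rfl SimpleGraph.edist_triangle)
    _ ≤ R + (1 + R) := add_le_add (edist_le_of_ballVec_ne_zero h₁)
      (add_le_add hxy (SimpleGraph.edist_comm ▸ edist_le_of_ballVec_ne_zero h₂))
  have := hsep.trans this
  norm_cast at this
  omega

lemma edgeTerm_eq (hux : G.Reachable u x) (hadj : G.Adj x y) (hx : G.dist u x ≤ R + 1)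
    (hy : G.dist u y ≤ R + 1) :
    edgeTerm G ρ R u x y = ((ρ + 2) - (ρ - 2) * (-1) ^ (G.dist u x + G.dist u y)) *
      (ballProfile ρ R (G.dist u x) * ballProfile ρ R (G.dist u y)) := by
  rw [edgeTerm, altBallVec_mul_altBallVec, ballVec_of_dist_le hux hx,
    ballVec_of_dist_le (hux.trans hadj.reachable) hy]
  ring

lemma edgeTerm_of_dist_eq_succ (hux : G.Reachable u x) (hadj : G.Adj x y) {a b : ℕ}
    (hab : b = a + 1 ∨ a = b + 1) (hx : G.dist u x = a) (hy : G.dist u y = b)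
    (ha : a ≤ R + 1) (hb : b ≤ R + 1) :
    edgeTerm G ρ R u x y = 2 * ρ * (ballProfile ρ R a * ballProfile ρ R b) := by
  have hodd : Odd (a + b) := by rcases hab with rfl | rfl <;> exact ⟨_, by ring⟩
  rw [edgeTerm_eq hux hadj (hx ▸ ha) (hy ▸ hb), hx, hy, hodd.neg_one_pow]
  ring

lemma edgeTerm_ge (hρ : 2 ≤ ρ) (hux : G.Reachable u x) (hadj : G.Adj x y) {a : ℕ}
    (hx : G.dist u x = a + 1) (ha : a + 1 ≤ R) :
    2 * ρ * (ballProfile ρ R (a + 1) * ballProfile ρ R (a + 2)) ≤ edgeTerm G ρ R u x y := by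
  have hρ0 : 0 < ρ := by linarith
  have hf : 0 ≤ ballProfile ρ R (a + 1) := ballProfile_nonneg hρ0.le (by omega)
  rcases hadj.diff_dist_adj (u := u) with hy | hy | hy
  · rw [edgeTerm_eq hux hadj (by omega) (by omega), hy, hx, Even.neg_one_pow ⟨a + 1, rfl⟩]
    nlinarith [mul_le_mul_of_nonneg_left (ballProfile_succ_le (R := R) (t := a + 1) hρ0
      (by omega)) hf]
  · rw [edgeTerm_of_dist_eq_succ hux hadj (Or.inl rfl) hx (by rw [hy, hx]) (by omega) (by omega)]
  · rw [edgeTerm_of_dist_eq_succ hux hadj (Or.inr rfl) hx (by rw [hy, hx]; rfl) (by omega)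
      (by omega)]
    have := ballProfile_add_two_le hρ (R := R) (t := a) (by omega)
    gcongr

variable [Fintype V]

lemma altBallVec_dotProduct_self :
    altBallVec G ρ R u ⬝ᵥ altBallVec G ρ R u = ballVec G ρ R u ⬝ᵥ ballVec G ρ R u := by
  refine Finset.sum_congr rfl fun x _ => ?_
  rw [altBallVec_mul_altBallVec, ← two_mul, pow_mul, neg_one_sq, one_pow, one_mul]

variable [DecidableRel G.Adj] {d : ℕ}

lemma sum_edgeTerm_ge (hreg : G.IsRegularOfDegree d) (hd : (d : ℝ) = ρ ^ 2 + 1) (hρ : 2 ≤ ρ)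
    (x : V) :
    4 * ρ ^ 2 * cos (π / (R + 2)) * (ballVec G ρ R u x * ballVec G ρ R u x) ≤
      ∑ y ∈ G.neighborFinset x, edgeTerm G ρ R u x y := by
  have hρ0 : 0 < ρ := by linarith
  by_cases hx0 : ballVec G ρ R u x = 0
  · simp [edgeTerm, altBallVec, hx0]
  obtain ⟨hux, hxR⟩ := reachable_and_dist_le_of_ballVec_ne_zero hx0
  have hcard : #(G.neighborFinset x) = d := (G.card_neighborFinset_eq_degree x).trans (hreg x)
  rw [ballVec_of_dist_le hux (by omega)]
  rcases hr : G.dist u x with _ | a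
  · obtain rfl : u = x := hux.dist_eq_zero_iff.1 hr
    have hnbr : ∀ y ∈ G.neighborFinset u,
        edgeTerm G ρ R u u y = 2 * ρ * (ballProfile ρ R 0 * ballProfile ρ R 1) := fun y hy =>
      edgeTerm_of_dist_eq_succ hux ((G.mem_neighborFinset _ _).1 hy) (Or.inl rfl) hr
        (dist_eq_one_iff_adj.2 ((G.mem_neighborFinset _ _).1 hy)) (by omega) (by omega)
    rw [sum_congr rfl hnbr, sum_const, hcard, nsmul_eq_mul, hd]
    have h0 : 0 ≤ 2 * ρ * ballProfile ρ R 0 :=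
      mul_nonneg (by positivity) (ballProfile_nonneg hρ0.le (by omega))
    nlinarith [mul_le_mul_of_nonneg_left (two_mul_cos_mul_ballProfile_zero_le hρ0 (R := R)) h0]
  -- A neighbour `y₀` one step closer to `u` contributes `2ρ f(a+1) f(a)`, the `d - 1` others
  -- at least `2ρ f(a+1) f(a+2)`; the recurrence of the profile finishes the estimate.
  · obtain ⟨y₀, hy₀, hdy₀⟩ := exists_adj_dist_eq hux hr
    have hmem : y₀ ∈ G.neighborFinset x := (G.mem_neighborFinset _ _).2 hy₀.symm
    have hrest : ((d : ℝ) - 1) * (2 * ρ * (ballProfile ρ R (a + 1) * ballProfile ρ R (a + 2)))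
        ≤ ∑ y ∈ (G.neighborFinset x).erase y₀, edgeTerm G ρ R u x y := by
      have hge : ∀ y ∈ (G.neighborFinset x).erase y₀,
          2 * ρ * (ballProfile ρ R (a + 1) * ballProfile ρ R (a + 2)) ≤ edgeTerm G ρ R u x y :=
        fun y hy => edgeTerm_ge hρ hux ((G.mem_neighborFinset _ _).1 (mem_of_mem_erase hy)) hr
          (by omega)
      have := card_nsmul_le_sum _ _ _ hge
      rwa [card_erase_of_mem hmem, hcard, nsmul_eq_mul,
        Nat.cast_pred (hcard ▸ card_pos.2 ⟨y₀, hmem⟩)] at this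
    rw [← add_sum_erase _ _ hmem, edgeTerm_of_dist_eq_succ hux hy₀.symm (Or.inr rfl) hr hdy₀
      (by omega) (by omega)]
    calc 4 * ρ ^ 2 * cos (π / (R + 2)) * (ballProfile ρ R (a + 1) * ballProfile ρ R (a + 1))
        = 2 * ρ * ballProfile ρ R (a + 1) *
            (ballProfile ρ R a + ρ ^ 2 * ballProfile ρ R (a + 2)) := by
          rw [ballProfile_recurrence hρ0.ne']; ring
      _ = 2 * ρ * (ballProfile ρ R (a + 1) * ballProfile ρ R a) +
            ((d : ℝ) - 1) * (2 * ρ * (ballProfile ρ R (a + 1) * ballProfile ρ R (a + 2))) := by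
          rw [hd]; ring
      _ ≤ _ := add_le_add le_rfl hrest

theorem ballVec_quadratic_bound (hreg : G.IsRegularOfDegree d) (hd : (d : ℝ) = ρ ^ 2 + 1)
    (hρ : 2 ≤ ρ) (u : V) :
    4 * ρ ^ 2 * cos (π / (R + 2)) * (ballVec G ρ R u ⬝ᵥ ballVec G ρ R u) ≤
      (ρ + 2) * (ballVec G ρ R u ⬝ᵥ (G.adjMatrix ℝ *ᵥ ballVec G ρ R u)) -
        (ρ - 2) * (altBallVec G ρ R u ⬝ᵥ (G.adjMatrix ℝ *ᵥ altBallVec G ρ R u)) := by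
  have hexp (g : V → ℝ) :
      g ⬝ᵥ (G.adjMatrix ℝ *ᵥ g) = ∑ x, ∑ y ∈ G.neighborFinset x, g x * g y := by
    simp only [dotProduct, adjMatrix_mulVec_apply, mul_sum]
  rw [hexp, hexp, dotProduct, mul_sum, mul_sum, mul_sum, ← sum_sub_distrib]
  refine sum_le_sum fun x _ => (sum_edgeTerm_ge hreg hd hρ x).trans_eq ?_
  simp only [edgeTerm, mul_sum, sum_sub_distrib]

lemma isOrthogonalFamily_adjMatrix {F : κ → V → ℝ} (hne : ∀ i, F i ≠ 0)
    (hF : Pairwise fun i j => ∀ x y, G.edist x y ≤ 1 → F i x * F j y = 0) :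
    IsOrthogonalFamily (G.adjMatrix ℝ) F := by
  refine ⟨hne, fun i j hij => sum_eq_zero fun x _ => hF hij x x (by simp), fun i j hij => ?_⟩
  refine sum_eq_zero fun x _ => ?_
  rw [adjMatrix_mulVec_apply, mul_sum]
  exact sum_eq_zero fun y hy =>
    hF hij x y (edist_eq_one_iff_adj.2 ((G.mem_neighborFinset _ _).1 hy)).le

lemma isOrthogonalFamily_ballVec (hρ : 0 < ρ) {v : κ → V}
    (hv : Pairwise fun i j => ((2 * R + 2 : ℕ) : ℕ∞) ≤ G.edist (v i) (v j)) :
    IsOrthogonalFamily (G.adjMatrix ℝ) fun i => ballVec G ρ R (v i) :=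
  isOrthogonalFamily_adjMatrix (fun i => ballVec_ne_zero hρ (v i))
    fun _ _ hij _ _ hxy => ballVec_mul_ballVec_eq_zero (hv hij) hxy

lemma isOrthogonalFamily_altBallVec (hρ : 0 < ρ) {v : κ → V}
    (hv : Pairwise fun i j => ((2 * R + 2 : ℕ) : ℕ∞) ≤ G.edist (v i) (v j)) :
    IsOrthogonalFamily (G.adjMatrix ℝ) fun i => altBallVec G ρ R (v i) :=
  isOrthogonalFamily_adjMatrix (fun i => altBallVec_ne_zero hρ (v i))
    fun _ _ hij _ _ hxy => by
      rw [altBallVec_mul_altBallVec, ballVec_mul_ballVec_eq_zero (hv hij) hxy, mul_zero]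

theorem ballVec_rayleigh_bound (hreg : G.IsRegularOfDegree d)
    (hd : (d : ℝ) = ρ ^ 2 + 1) (hρ : 2 ≤ ρ) (u : V) :
    4 * ρ ^ 2 * cos (π / (R + 2)) ≤
      (ρ + 2) * rayleigh (G.adjMatrix ℝ) (ballVec G ρ R u) -
        (ρ - 2) * rayleigh (G.adjMatrix ℝ) (altBallVec G ρ R u) := by
  rw [rayleigh, rayleigh, altBallVec_dotProduct_self, mul_div_assoc', mul_div_assoc', ← sub_div,
    le_div_iff₀ (dotProduct_self_pos (ballVec_ne_zero (by linarith) u))]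
  exact ballVec_quadratic_bound hreg hd hρ u

end BallVec

theorem stmt12_general {n : ℕ} (s k d : ℕ) (hk : 1 ≤ k) (hd : 5 ≤ d)
    (G : SimpleGraph (Fin n)) (hreg : G.IsRegularOfDegree d)
    (v : Fin (2 * s + 1) → Fin n) (hinj : Function.Injective v)
    (hdist : ∀ i j, i ≠ j → ((4 * k : ℕ) : ℕ∞) ≤ G.edist (v i) (v j)) :
    (Real.sqrt ((d : ℝ) - 1) + 2) * adjEig G (s + 1) -
        (Real.sqrt ((d : ℝ) - 1) - 2) * adjEig G (n - s + 1) ≥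
      4 * ((d : ℝ) - 1) * Real.cos (Real.pi / (2 * k)) := by
  set ρ := Real.sqrt ((d : ℝ) - 1)
  have hd' : (5 : ℝ) ≤ d := by exact_mod_cast hd
  have hρsq : ρ ^ 2 = d - 1 := Real.sq_sqrt (by linarith)
  have hρ : 2 ≤ ρ := by nlinarith [Real.sqrt_nonneg ((d : ℝ) - 1)]
  have hn : 2 * s + 1 ≤ n := by simpa using Fintype.card_le_of_injective v hinj
  have hsep : Pairwise fun i j => ((2 * (2 * k - 2) + 2 : ℕ) : ℕ∞) ≤ G.edist (v i) (v j) :=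
    fun i j hij => le_trans (by norm_cast; omega) (hdist i j hij)
  obtain ⟨i, hup, hdown⟩ := exists_rayleigh_le_sortedEigs_and_sortedEigs_le_rayleigh
    (G.isHermitian_adjMatrix ℝ) (Fintype.card_fin _) (isOrthogonalFamily_ballVec (by linarith) hsep)
    (isOrthogonalFamily_altBallVec (by linarith) hsep)
    (j₁ := ⟨n - (s + 1), by omega⟩) (j₂ := ⟨n - (n - s + 1), by omega⟩)
    (by simp only; omega) (by simp only; omega)
  have hball := ballVec_rayleigh_bound hreg (by linarith) hρ (v i) (R := 2 * k - 2)
  rw [show ((2 * k - 2 : ℕ) : ℝ) + 2 = 2 * k by rw [Nat.cast_sub (by omega)]; push_cast; ring,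
    hρsq] at hball
  rw [adjEig, dif_pos (by omega), adjEig, dif_pos (by omega), ge_iff_le]
  linarith [mul_le_mul_of_nonneg_left hup (by linarith : (0 : ℝ) ≤ ρ + 2),
    mul_le_mul_of_nonneg_left hdown (by linarith : (0 : ℝ) ≤ ρ - 2)]

/-- Let `s, k ≥ 1`, `d ≥ 5`, and let `G` be an `n`-vertex `d`-regular
graph containing `2s+1` distinct vertices whose pairwise distances (in `ℕ∞`) are all at
least `4k`. Then `(√(d-1)+2)·μ_{s+1}(G) − (√(d-1)-2)·μ_{n-s+1}(G) ≥ 4(d-1)·cos(π/(2k))`. -/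
theorem stmt12 {n : ℕ} (s k d : ℕ) (hs : 1 ≤ s) (hk : 1 ≤ k) (hd : 5 ≤ d)
    (G : SimpleGraph (Fin n)) (hreg : G.IsRegularOfDegree d)
    (v : Fin (2 * s + 1) → Fin n) (hinj : Function.Injective v)
    (hdist : ∀ i j, i ≠ j → ((4 * k : ℕ) : ℕ∞) ≤ G.edist (v i) (v j)) :
    (Real.sqrt ((d : ℝ) - 1) + 2) * adjEig G (s + 1) -
        (Real.sqrt ((d : ℝ) - 1) - 2) * adjEig G (n - s + 1) ≥
      4 * ((d : ℝ) - 1) * Real.cos (Real.pi / (2 * k)) :=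
  stmt12_general s k d hk hd G hreg v hinj hdist
end
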